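/- arXiv:quant-ph/0211064 — 4 statements merged into one kernel-verified Lean document; each statement's English description precedes it below -/
import Mathlib

section
/- Two two-valued observables E₁ and E₂ (with value spaces {ω,ω'} and {ξ,ξ'}, so ran(E₁) = {O, A₁, I−A₁, I} and ran(E₂) = {O, A₂, I−A₂, I}) are coexistent if and only if they are functionally coexistent. In particular, if E is an observable on (Ω,𝒜) with E(X) = A₁ and E(Y) = A₂ for some X, Y ∈ 𝒜, then there exist a four-valued observable E' (a coarse-graining of E along the partition {X∩Y, X'∩Y, X∩Y', X'∩Y'}) and functions f₁, f₂ from its four-point value space to {ω,ω'} and {ξ,ξ'} such that A₁ = E'(f₁⁻¹(ω)) and A₂ = E'(f₂⁻¹(ξ)). -/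
open MeasureTheory

noncomputable section

/-- The numerical "expectation" `⟪φ, T φ⟫` of an operator `T` at a vector `φ`. -/
def ev {H : Type*} [NormedAddCommGroup H] [InnerProductSpace ℂ H]
    (T : H →L[ℂ] H) (φ : H) : ℂ :=
  @inner ℂ H _ φ (T φ)

/-- An observable: a positive, normalized, weakly σ-additive operator measure, defined on
the measurable sets of `(Ω, 𝒜)` with values in the bounded operators on `H`. -/
structure Observable (Ω : Type*) [MeasurableSpace Ω] (H : Type*) [NormedAddCommGroup H]
    [InnerProductSpace ℂ H] [CompleteSpace H] where
  toFun : Set Ω → (H →L[ℂ] H)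
  pos : ∀ X : Set Ω, MeasurableSet X → (toFun X).IsPositive
  normalized : toFun Set.univ = 1
  sigmaAdditive : ∀ f : ℕ → Set Ω, (∀ i, MeasurableSet (f i)) →
    Pairwise (Function.onFun Disjoint f) → ∀ φ : H,
      HasSum (fun i => ev (toFun (f i)) φ) (ev (toFun (⋃ i, f i)) φ)

/-- The Löwner order on bounded operators: `opLE A B` iff `B - A` is positive. -/
def opLE {H : Type*} [NormedAddCommGroup H] [InnerProductSpace ℂ H] [CompleteSpace H]
    (A B : H →L[ℂ] H) : Prop :=
  (B - A).IsPositive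

namespace Observable

variable {H : Type*} [NormedAddCommGroup H] [InnerProductSpace ℂ H] [CompleteSpace H]

/-- The range `ran(E) = {E(X) | X ∈ 𝒜}` of an observable. -/
def ran {Ω : Type*} [MeasurableSpace Ω] (E : Observable Ω H) : Set (H →L[ℂ] H) :=
  {A | ∃ X : Set Ω, MeasurableSet X ∧ A = E.toFun X}

/-- A projection valued observable: every value is an orthogonal projection. -/
def ProjectionValued {Ω : Type*} [MeasurableSpace Ω] (E : Observable Ω H) : Prop :=
  ∀ X : Set Ω, MeasurableSet X → IsSelfAdjoint (E.toFun X) ∧ IsIdempotentElem (E.toFun X)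

/-- A regular observable: for every `X` with `O ≠ E(X) ≠ I`, neither `E(X) ≤ (1/2)I`
nor `(1/2)I ≤ E(X)`. -/
def Regular {Ω : Type*} [MeasurableSpace Ω] (E : Observable Ω H) : Prop :=
  ∀ X : Set Ω, MeasurableSet X → E.toFun X ≠ 0 → E.toFun X ≠ 1 →
    ¬ opLE (E.toFun X) ((1/2 : ℂ) • 1) ∧ ¬ opLE ((1/2 : ℂ) • 1) (E.toFun X)

end Observable

variable {H : Type*} [NormedAddCommGroup H] [InnerProductSpace ℂ H] [CompleteSpace H]

/-- Coexistence: the union of the ranges of `E₁` and `E₂` is contained in the range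
of a third observable. -/
def Coexistent {Ω₁ Ω₂ : Type*} [MeasurableSpace Ω₁] [MeasurableSpace Ω₂]
    (E₁ : Observable Ω₁ H) (E₂ : Observable Ω₂ H) : Prop :=
  ∃ (Ω : Type) (_m : MeasurableSpace Ω) (E : Observable Ω H),
    E₁.ran ∪ E₂.ran ⊆ E.ran

/-- Commensurability: coexistence witnessed by a projection valued observable. -/
def CommensurableObs {Ω₁ Ω₂ : Type*} [MeasurableSpace Ω₁] [MeasurableSpace Ω₂]
    (E₁ : Observable Ω₁ H) (E₂ : Observable Ω₂ H) : Prop :=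
  ∃ (Ω : Type) (_m : MeasurableSpace Ω) (E : Observable Ω H),
    E.ProjectionValued ∧ E₁.ran ∪ E₂.ran ⊆ E.ran

/-- Functional coexistence: `E₁` and `E₂` are obtained from a single observable `E` as
preimages under measurable functions. -/
def FunctionallyCoexistent {Ω₁ Ω₂ : Type*} [MeasurableSpace Ω₁] [MeasurableSpace Ω₂]
    (E₁ : Observable Ω₁ H) (E₂ : Observable Ω₂ H) : Prop :=
  ∃ (Ω : Type) (_m : MeasurableSpace Ω) (E : Observable Ω H)
    (f₁ : Ω → Ω₁) (f₂ : Ω → Ω₂),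
      Measurable f₁ ∧ Measurable f₂ ∧
      (∀ X : Set Ω₁, MeasurableSet X → E₁.toFun X = E.toFun (f₁ ⁻¹' X)) ∧
      (∀ Y : Set Ω₂, MeasurableSet Y → E₂.toFun Y = E.toFun (f₂ ⁻¹' Y))

/-- A positive operator bimeasure: positive values, and each partial map is weakly
σ-additive. -/
def IsPOBimeasure {Ω₁ Ω₂ : Type*} [MeasurableSpace Ω₁] [MeasurableSpace Ω₂]
    (B : Set Ω₁ → Set Ω₂ → (H →L[ℂ] H)) : Prop :=
  (∀ (X : Set Ω₁) (Y : Set Ω₂), MeasurableSet X → MeasurableSet Y → (B X Y).IsPositive) ∧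
  (∀ Y : Set Ω₂, MeasurableSet Y → ∀ f : ℕ → Set Ω₁, (∀ i, MeasurableSet (f i)) →
    Pairwise (Function.onFun Disjoint f) → ∀ φ : H,
      HasSum (fun i => ev (B (f i) Y) φ) (ev (B (⋃ i, f i) Y) φ)) ∧
  (∀ X : Set Ω₁, MeasurableSet X → ∀ g : ℕ → Set Ω₂, (∀ i, MeasurableSet (g i)) →
    Pairwise (Function.onFun Disjoint g) → ∀ φ : H,
      HasSum (fun i => ev (B X (g i)) φ) (ev (B X (⋃ i, g i)) φ))

/-- `B` is a biobservable for `E₁` and `E₂`. -/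
def IsBiobservable {Ω₁ Ω₂ : Type*} [MeasurableSpace Ω₁] [MeasurableSpace Ω₂]
    (B : Set Ω₁ → Set Ω₂ → (H →L[ℂ] H))
    (E₁ : Observable Ω₁ H) (E₂ : Observable Ω₂ H) : Prop :=
  IsPOBimeasure B ∧ B Set.univ Set.univ = 1 ∧
  (∀ X : Set Ω₁, MeasurableSet X → B X Set.univ = E₁.toFun X) ∧
  (∀ Y : Set Ω₂, MeasurableSet Y → B Set.univ Y = E₂.toFun Y)

/-- `E₁` and `E₂` have a biobservable. -/
def HasBiobservable {Ω₁ Ω₂ : Type*} [MeasurableSpace Ω₁] [MeasurableSpace Ω₂]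
    (E₁ : Observable Ω₁ H) (E₂ : Observable Ω₂ H) : Prop :=
  ∃ B : Set Ω₁ → Set Ω₂ → (H →L[ℂ] H), IsBiobservable B E₁ E₂

/-- `F` is a joint observable of `E₁` and `E₂`: its marginals are `E₁` and `E₂`. -/
def IsJointObservable {Ω₁ Ω₂ : Type*} [MeasurableSpace Ω₁] [MeasurableSpace Ω₂]
    (F : Observable (Ω₁ × Ω₂) H)
    (E₁ : Observable Ω₁ H) (E₂ : Observable Ω₂ H) : Prop :=
  (∀ X : Set Ω₁, MeasurableSet X → F.toFun (X ×ˢ (Set.univ : Set Ω₂)) = E₁.toFun X) ∧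
  (∀ Y : Set Ω₂, MeasurableSet Y → F.toFun ((Set.univ : Set Ω₁) ×ˢ Y) = E₂.toFun Y)

/-- `E₁` and `E₂` have a joint observable. -/
def HasJointObservable {Ω₁ Ω₂ : Type*} [MeasurableSpace Ω₁] [MeasurableSpace Ω₂]
    (E₁ : Observable Ω₁ H) (E₂ : Observable Ω₂ H) : Prop :=
  ∃ F : Observable (Ω₁ × Ω₂) H, IsJointObservable F E₁ E₂

/-- The commutativity domain of two observables. -/
def comSet {Ω₁ Ω₂ : Type*} [MeasurableSpace Ω₁] [MeasurableSpace Ω₂]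
    (E₁ : Observable Ω₁ H) (E₂ : Observable Ω₂ H) : Set H :=
  {φ | ∀ (X : Set Ω₁) (Y : Set Ω₂), MeasurableSet X → MeasurableSet Y →
    (E₁.toFun X) ((E₂.toFun Y) φ) = (E₂.toFun Y) ((E₁.toFun X) φ)}

/-- `ran(E)` is a Boolean algebra with respect to the order inherited from the effects,
with complement `A ↦ I - A`. -/
def RanIsBoolean {Ω : Type*} [MeasurableSpace Ω] (E : Observable Ω H) : Prop :=
  ∃ inst : BooleanAlgebra E.ran,
    (∀ a b : E.ran, (letI := inst; a ≤ b) ↔ opLE (a : H →L[ℂ] H) (b : H →L[ℂ] H)) ∧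
    (∀ a : E.ran, letI := inst; ((aᶜ : E.ran) : H →L[ℂ] H) = 1 - (a : H →L[ℂ] H))


set_option linter.unusedSectionVars false

section AuxLemmas

lemma op_ext {T S : H →L[ℂ] H} (h : ∀ φ, ev T φ = ev S φ) : T = S := by
  apply ContinuousLinearMap.coe_injective
  rw [← ext_inner_map (T : H →ₗ[ℂ] H) (S : H →ₗ[ℂ] H)]
  intro x
  have hx : (inner ℂ x (T x) : ℂ) = inner ℂ x (S x) := h x
  simp only [ContinuousLinearMap.coe_coe]
  rw [← inner_conj_symm, hx, inner_conj_symm]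

lemma ev_zero' (φ : H) : ev (0 : H →L[ℂ] H) φ = 0 := by
  simp [ev]

lemma ev_add' (T S : H →L[ℂ] H) (φ : H) : ev (T + S) φ = ev T φ + ev S φ := by
  simp [ev, inner_add_right]

variable {Ω : Type*} [MeasurableSpace Ω]

lemma Observable.toFun_empty (E : Observable Ω H) : E.toFun ∅ = 0 := by
  apply op_ext; intro φ
  have h := E.sigmaAdditive (fun _ => ∅) (fun _ => MeasurableSet.empty)
    (fun i j _ => by simp [Function.onFun]) φ
  rw [Set.iUnion_empty] at h
  have h0 : Filter.Tendsto (fun _ : ℕ => ev (E.toFun ∅) φ) Filter.atTop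
      (nhds (ev (E.toFun ∅) φ)) := tendsto_const_nhds
  have := tendsto_nhds_unique h0 h.summable.tendsto_atTop_zero
  rw [this, ev_zero']

lemma Observable.toFun_union (E : Observable Ω H) {A B : Set Ω}
    (hA : MeasurableSet A) (hB : MeasurableSet B) (hd : Disjoint A B) :
    E.toFun (A ∪ B) = E.toFun A + E.toFun B := by
  apply op_ext; intro φ
  set f : ℕ → Set Ω := fun n => match n with | 0 => A | 1 => B | _ => ∅ with hf
  have hmeas : ∀ i, MeasurableSet (f i) := by
    intro i; match i with
    | 0 => exact hA
    | 1 => exact hB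
    | (n+2) => exact MeasurableSet.empty
  have hpair : Pairwise (Function.onFun Disjoint f) := by
    intro i j hij
    simp only [Function.onFun, hf]
    match i, j with
    | 0, 0 => exact absurd rfl hij
    | 0, 1 => exact hd
    | 1, 0 => exact hd.symm
    | 1, 1 => exact absurd rfl hij
    | 0, (n+2) => exact disjoint_bot_right
    | 1, (n+2) => exact disjoint_bot_right
    | (n+2), 0 => exact disjoint_bot_left
    | (n+2), 1 => exact disjoint_bot_left
    | (n+2), (m+2) => exact disjoint_bot_left
  have hU : (⋃ i, f i) = A ∪ B := by
    apply subset_antisymm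
    · apply Set.iUnion_subset
      intro i; match i with
      | 0 => exact Set.subset_union_left
      | 1 => exact Set.subset_union_right
      | (n+2) => exact Set.empty_subset _
    · exact Set.union_subset (Set.subset_iUnion f 0) (Set.subset_iUnion f 1)
  have h := E.sigmaAdditive f hmeas hpair φ
  rw [hU] at h
  have h2 : HasSum (fun i => ev (E.toFun (f i)) φ)
      (ev (E.toFun A) φ + ev (E.toFun B) φ) := by
    have heq : (ev (E.toFun A) φ + ev (E.toFun B) φ)
        = ∑ i ∈ ({0, 1} : Finset ℕ), ev (E.toFun (f i)) φ := by
      simp [hf]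
    rw [heq]
    apply hasSum_sum_of_ne_finset_zero
    intro b hb
    match b with
    | 0 => simp at hb
    | 1 => simp at hb
    | (n+2) => show ev (E.toFun ∅) φ = 0; rw [E.toFun_empty, ev_zero']
  rw [h.unique h2, ev_add']

lemma Observable.toFun_compl (E : Observable Ω H) {A : Set Ω} (hA : MeasurableSet A) :
    E.toFun Aᶜ = 1 - E.toFun A := by
  have h := E.toFun_union hA hA.compl disjoint_compl_right
  rw [Set.union_compl_self, E.normalized] at h
  rw [eq_sub_iff_add_eq, add_comm, ← h]

/-- Pullback of an observable along a measurable map. -/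
def Observable.comap {Ω' : Type*} [MeasurableSpace Ω']
    (E : Observable Ω H) (g : Ω → Ω') (hg : Measurable g) : Observable Ω' H where
  toFun S := E.toFun (g ⁻¹' S)
  pos S hS := E.pos _ (hg hS)
  normalized := by show E.toFun (g ⁻¹' Set.univ) = 1; rw [Set.preimage_univ, E.normalized]
  sigmaAdditive f hf hd φ := by
    have h := E.sigmaAdditive (fun i => g ⁻¹' f i) (fun i => hg (hf i))
      (fun i j hij => Disjoint.preimage g (hd hij)) φ
    rwa [← Set.preimage_iUnion] at h

open Classical in
/-- Boolean indicator of a set. -/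
def indBool {α : Type*} (X : Set α) : α → Bool := fun ω => if ω ∈ X then true else false

lemma indBool_preimage_true {α : Type*} (X : Set α) : indBool X ⁻¹' {true} = X := by
  ext ω; simp [indBool]

lemma indBool_preimage_false {α : Type*} (X : Set α) : indBool X ⁻¹' {false} = Xᶜ := by
  ext ω; simp [indBool]

lemma indBool_measurable {X : Set Ω} (hX : MeasurableSet X) : Measurable (indBool X) :=
  Measurable.ite hX measurable_const measurable_const

lemma boolSet_cases (S : Set Bool) :
    S = ∅ ∨ S = {true} ∨ S = {false} ∨ S = Set.univ := by
  by_cases ht : true ∈ S <;> by_cases hf : false ∈ S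
  · right; right; right; ext b; cases b <;> simp [ht, hf]
  · right; left; ext b; cases b <;> simp [ht, hf]
  · right; right; left; ext b; cases b <;> simp [ht, hf]
  · left; ext b; cases b <;> simp [ht, hf]

lemma false_singleton_eq_compl : ({false} : Set Bool) = ({true} : Set Bool)ᶜ := by
  ext b; cases b <;> simp

/-- Key marginal lemma: a two-valued observable agreeing with `E` on `{true}` is the
pullback of `E` along the boolean indicator of `X`. -/
lemma key_marginal {Ω : Type*} [MeasurableSpace Ω] (E : Observable Ω H)
    (E₁ : Observable Bool H) {X : Set Ω} (hX : MeasurableSet X)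
    (hXe : E₁.toFun {true} = E.toFun X) :
    ∀ S : Set Bool, MeasurableSet S → E₁.toFun S = E.toFun (indBool X ⁻¹' S) := by
  intro S _
  rcases boolSet_cases S with rfl | rfl | rfl | rfl
  · rw [Set.preimage_empty, E₁.toFun_empty, E.toFun_empty]
  · rw [indBool_preimage_true, hXe]
  · rw [indBool_preimage_false, E.toFun_compl hX, false_singleton_eq_compl,
      E₁.toFun_compl MeasurableSet.of_discrete, hXe]
  · rw [Set.preimage_univ, E₁.normalized, E.normalized]

end AuxLemmas

/-- For two-valued observables, coexistence is equivalent to functional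
coexistence; moreover, any observable `E` taking the values `A₁ = E₁({true})` and
`A₂ = E₂({true})` admits a four-valued coarse-graining along the partition
`{X∩Y, Xᶜ∩Y, X∩Yᶜ, Xᶜ∩Yᶜ}` of which `A₁` and `A₂` are values of preimages. -/
theorem twoValued_coexistent_iff_functionallyCoexistent
    (E₁ E₂ : Observable Bool H) :
    (Coexistent E₁ E₂ ↔ FunctionallyCoexistent E₁ E₂) ∧
    (∀ (Ω : Type) (_m : MeasurableSpace Ω) (E : Observable Ω H) (X Y : Set Ω),
      MeasurableSet X → MeasurableSet Y →
      E.toFun X = E₁.toFun {true} → E.toFun Y = E₂.toFun {true} →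
      ∃ (E' : Observable (Fin 4) H) (f₁ f₂ : Fin 4 → Bool),
        E'.toFun {0} = E.toFun (X ∩ Y) ∧
        E'.toFun {1} = E.toFun (Xᶜ ∩ Y) ∧
        E'.toFun {2} = E.toFun (X ∩ Yᶜ) ∧
        E'.toFun {3} = E.toFun (Xᶜ ∩ Yᶜ) ∧
        E₁.toFun {true} = E'.toFun (f₁ ⁻¹' {true}) ∧
        E₂.toFun {true} = E'.toFun (f₂ ⁻¹' {true})) := by
  classical
  constructor
  · constructor
    · rintro ⟨Ω, m, E, hsub⟩
      obtain ⟨X, hX, hXe⟩ := hsub (Or.inl ⟨{true}, MeasurableSet.of_discrete, rfl⟩)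
      obtain ⟨Y, hY, hYe⟩ := hsub (Or.inr ⟨{true}, MeasurableSet.of_discrete, rfl⟩)
      exact ⟨Ω, m, E, indBool X, indBool Y, indBool_measurable hX, indBool_measurable hY,
        key_marginal E E₁ hX hXe, key_marginal E E₂ hY hYe⟩
    · rintro ⟨Ω, m, E, f₁, f₂, hm1, hm2, h1, h2⟩
      refine ⟨Ω, m, E, ?_⟩
      rintro A (⟨S, hS, rfl⟩ | ⟨S, hS, rfl⟩)
      · exact ⟨f₁ ⁻¹' S, hm1 hS, h1 S hS⟩
      · exact ⟨f₂ ⁻¹' S, hm2 hS, h2 S hS⟩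
  · intro Ω m E X Y hX hY hXe hYe
    set g : Ω → Fin 4 := fun ω =>
      if ω ∈ X then (if ω ∈ Y then 0 else 2) else (if ω ∈ Y then 1 else 3) with hgdef
    have hg : Measurable g :=
      Measurable.ite hX (Measurable.ite hY measurable_const measurable_const)
        (Measurable.ite hY measurable_const measurable_const)
    refine ⟨E.comap g hg, fun i => decide (i = 0 ∨ i = 2), fun i => decide (i = 0 ∨ i = 1),
      ?_, ?_, ?_, ?_, ?_, ?_⟩
    · show E.toFun (g ⁻¹' {0}) = E.toFun (X ∩ Y)
      congr 1
      ext ω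
      simp only [Set.mem_preimage, Set.mem_singleton_iff, Set.mem_inter_iff, hgdef]
      split_ifs <;> simp_all
    · show E.toFun (g ⁻¹' {1}) = E.toFun (Xᶜ ∩ Y)
      congr 1
      ext ω
      simp only [Set.mem_preimage, Set.mem_singleton_iff, Set.mem_inter_iff,
        Set.mem_compl_iff, hgdef]
      split_ifs <;> simp_all
    · show E.toFun (g ⁻¹' {2}) = E.toFun (X ∩ Yᶜ)
      congr 1
      ext ω
      simp only [Set.mem_preimage, Set.mem_singleton_iff, Set.mem_inter_iff,
        Set.mem_compl_iff, hgdef]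
      split_ifs <;> simp_all
    · show E.toFun (g ⁻¹' {3}) = E.toFun (Xᶜ ∩ Yᶜ)
      congr 1
      ext ω
      simp only [Set.mem_preimage, Set.mem_singleton_iff, Set.mem_inter_iff,
        Set.mem_compl_iff, hgdef]
      split_ifs <;> simp_all
    · show E₁.toFun {true} = E.toFun (g ⁻¹' ((fun i => decide (i = 0 ∨ i = 2)) ⁻¹' {true}))
      rw [← hXe]
      congr 1
      ext ω
      simp only [Set.mem_preimage, Set.mem_singleton_iff, decide_eq_true_eq, hgdef]
      split_ifs <;> simp_all
    · show E₂.toFun {true} = E.toFun (g ⁻¹' ((fun i => decide (i = 0 ∨ i = 1)) ⁻¹' {true}))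
      rw [← hYe]
      congr 1
      ext ω
      simp only [Set.mem_preimage, Set.mem_singleton_iff, decide_eq_true_eq, hgdef]
      split_ifs <;> simp_all


end
end

section
/- Suppose there exist an observable E : ℬ(Ω) → L(H) and σ-homomorphisms of Boolean σ-algebras h₁ : ℬ(Ω₁) → ℬ(Ω) and h₂ : ℬ(Ω₂) → ℬ(Ω) such that E₁(X) = E(h₁(X)) and E₂(Y) = E(h₂(Y)) for all X ∈ ℬ(Ω₁), Y ∈ ℬ(Ω₂). Then the map (X,Y) ↦ E(h₁(X) ∩ h₂(Y)) is a positive operator bimeasure, and hence E₁ and E₂ are functionally coexistent. -/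
open MeasureTheory

set_option linter.unusedSectionVars false

noncomputable section SikorskiAux

section Helpers

variable {α : Type*} [MeasurableSpace α] {Ω : Type*} [MeasurableSpace Ω]

theorem sh_empty (h : Set α → Set Ω)
    (huniv : h Set.univ = Set.univ)
    (hcompl : ∀ X : Set α, MeasurableSet X → h Xᶜ = (h X)ᶜ) :
    h ∅ = ∅ := by
  have := hcompl Set.univ MeasurableSet.univ
  simpa [huniv] using this

theorem sh_union₂ (h : Set α → Set Ω)
    (hiUnion : ∀ f : ℕ → Set α, (∀ i, MeasurableSet (f i)) → h (⋃ i, f i) = ⋃ i, h (f i))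
    (A B : Set α) (hA : MeasurableSet A) (hB : MeasurableSet B) :
    h (A ∪ B) = h A ∪ h B := by
  have hu : (⋃ i, (Nat.casesOn i A fun _ => B : Set α)) = A ∪ B := by
    ext x
    simp only [Set.mem_iUnion, Set.mem_union]
    constructor
    · rintro ⟨n, hn⟩; cases n with
      | zero => exact Or.inl hn
      | succ k => exact Or.inr hn
    · rintro (hx | hx)
      · exact ⟨0, hx⟩
      · exact ⟨1, hx⟩
  have hu' : (⋃ i, h (Nat.casesOn i A fun _ => B : Set α)) = h A ∪ h B := by
    ext x
    simp only [Set.mem_iUnion, Set.mem_union]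
    constructor
    · rintro ⟨n, hn⟩; cases n with
      | zero => exact Or.inl hn
      | succ k => exact Or.inr hn
    · rintro (hx | hx)
      · exact ⟨0, hx⟩
      · exact ⟨1, hx⟩
  have := hiUnion (fun i => Nat.casesOn i A fun _ => B)
    (fun i => by cases i with
      | zero => exact hA
      | succ k => exact hB)
  rw [hu, hu'] at this
  exact this

theorem sh_inter₂ (h : Set α → Set Ω)
    (hcompl : ∀ X : Set α, MeasurableSet X → h Xᶜ = (h X)ᶜ)
    (hiUnion : ∀ f : ℕ → Set α, (∀ i, MeasurableSet (f i)) → h (⋃ i, f i) = ⋃ i, h (f i))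
    (A B : Set α) (hA : MeasurableSet A) (hB : MeasurableSet B) :
    h (A ∩ B) = h A ∩ h B := by
  have h1 : A ∩ B = (Aᶜ ∪ Bᶜ)ᶜ := by simp [Set.compl_union]
  rw [h1, hcompl _ (hA.compl.union hB.compl),
    sh_union₂ h hiUnion _ _ hA.compl hB.compl, hcompl _ hA, hcompl _ hB,
    Set.compl_union, compl_compl, compl_compl]

theorem sh_iInter (h : Set α → Set Ω)
    (hcompl : ∀ X : Set α, MeasurableSet X → h Xᶜ = (h X)ᶜ)
    (hiUnion : ∀ f : ℕ → Set α, (∀ i, MeasurableSet (f i)) → h (⋃ i, f i) = ⋃ i, h (f i))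
    (f : ℕ → Set α) (hf : ∀ i, MeasurableSet (f i)) :
    h (⋂ i, f i) = ⋂ i, h (f i) := by
  have h1 : (⋂ i, f i) = (⋃ i, (f i)ᶜ)ᶜ := by simp [Set.compl_iUnion]
  rw [h1, hcompl _ (MeasurableSet.iUnion fun i => (hf i).compl),
    hiUnion _ (fun i => (hf i).compl)]
  simp only [fun i => hcompl (f i) (hf i)]
  simp [Set.compl_iUnion]

end Helpers

section Sikorski

variable {α : Type*} [TopologicalSpace α] [TopologicalSpace.MetrizableSpace α]
  [TopologicalSpace.SeparableSpace α] [MeasurableSpace α] [BorelSpace α]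
  {Ω : Type*} [MeasurableSpace Ω]

/-- Sikorski-type point realization of a σ-homomorphism, factored through Cantor space. -/
theorem sikorski_factor (hΩ : Nonempty Ω) (h : Set α → Set Ω)
    (huniv : h Set.univ = Set.univ)
    (hcompl : ∀ X : Set α, MeasurableSet X → h Xᶜ = (h X)ᶜ)
    (hiUnion : ∀ f : ℕ → Set α, (∀ i, MeasurableSet (f i)) → h (⋃ i, f i) = ⋃ i, h (f i)) :
    ∃ (g : Ω → ℕ → Bool) (F : (ℕ → Bool) → α),
      ∀ X : Set α, MeasurableSet X → h X = (fun ω => F (g ω)) ⁻¹' X := by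
  classical
  have hempty : h ∅ = ∅ := sh_empty h huniv hcompl
  have hα : Nonempty α := by
    by_contra hα
    rw [not_nonempty_iff] at hα
    have h1 : (Set.univ : Set α) = ∅ := Set.eq_empty_of_isEmpty _
    have h2 : (∅ : Set Ω) = Set.univ := by rw [← hempty, ← h1, huniv]
    obtain ⟨ω⟩ := hΩ
    have : ω ∈ (∅ : Set Ω) := h2 ▸ Set.mem_univ ω
    exact this
  letI := TopologicalSpace.pseudoMetrizableSpacePseudoMetric α
  haveI : SecondCountableTopology α := UniformSpace.secondCountable_of_separable α
  obtain ⟨b, hbc, _, hbasis⟩ := TopologicalSpace.exists_countable_basis α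
  obtain ⟨U, hU⟩ := (hbc.insert ∅).exists_eq_range (Set.insert_nonempty _ _)
  have hUmeas : ∀ n, MeasurableSet (U n) := by
    intro n
    have : U n ∈ insert ∅ b := hU ▸ Set.mem_range_self n
    rcases this with h0 | hb
    · rw [h0]; exact MeasurableSet.empty
    · exact (hbasis.isOpen hb).measurableSet
  have hgen : (‹MeasurableSpace α› : MeasurableSpace α) ≤
      MeasurableSpace.generateFrom (Set.range U) := by
    rw [BorelSpace.measurable_eq (α := α), hbasis.borel_eq_generateFrom]
    exact MeasurableSpace.generateFrom_mono (hU ▸ Set.subset_insert _ _)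
  -- the cylinder intersection associated to a bit sequence
  set C : (ℕ → Bool) → Set α := fun s => ⋂ n, (if s n then U n else (U n)ᶜ) with hCdef
  set g : Ω → ℕ → Bool := fun ω n => decide (ω ∈ h (U n)) with hgdef
  set F : (ℕ → Bool) → α := fun s => if hs : (C s).Nonempty then hs.some else hα.some
    with hFdef
  set S : Ω → ℕ → Set α := fun ω n => if ω ∈ h (U n) then U n else (U n)ᶜ with hSdef
  have hCg : ∀ ω, C (g ω) = ⋂ n, S ω n := by
    intro ω
    simp only [hCdef, hgdef, hSdef, decide_eq_true_eq]
  have hSmeas : ∀ ω n, MeasurableSet (S ω n) := by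
    intro ω n
    simp only [hSdef]
    split
    · exact hUmeas n
    · exact (hUmeas n).compl
  have hmem : ∀ ω : Ω, ω ∈ h (⋂ n, S ω n) := by
    intro ω
    rw [sh_iInter h hcompl hiUnion _ (hSmeas ω)]
    rw [Set.mem_iInter]
    intro n
    by_cases hω : ω ∈ h (U n)
    · simpa [hSdef, hω] using hω
    · simp only [hSdef, hω, if_false]
      rw [hcompl _ (hUmeas n)]
      exact hω
  have hne : ∀ ω : Ω, (C (g ω)).Nonempty := by
    intro ω
    rw [hCg]
    by_contra hc
    rw [Set.not_nonempty_iff_eq_empty] at hc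
    have := hmem ω
    rw [hc, hempty] at this
    exact this
  have hfmem : ∀ ω : Ω, F (g ω) ∈ ⋂ n, S ω n := by
    intro ω
    have : F (g ω) = (hne ω).some := by
      simp only [hFdef]
      rw [dif_pos (hne ω)]
    rw [this, ← hCg]
    exact (hne ω).some_mem
  have hfU : ∀ n, h (U n) = (fun ω => F (g ω)) ⁻¹' (U n) := by
    intro n
    ext ω
    have hfn := Set.mem_iInter.mp (hfmem ω) n
    constructor
    · intro hω
      simpa [hSdef, hω] using hfn
    · intro hω
      by_contra hc
      simp only [hSdef, hc, if_false, Set.mem_compl_iff] at hfn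
      exact hfn hω
  have hle : MeasurableSpace.generateFrom (Set.range U) ≤
      (MeasurableSpace.mk
        (fun X => MeasurableSet X ∧ h X = (fun ω => F (g ω)) ⁻¹' X)
        ⟨MeasurableSet.empty, by simp [hempty]⟩
        (fun X hX => ⟨hX.1.compl, by rw [hcompl X hX.1, hX.2]; rfl⟩)
        (fun f hf => ⟨MeasurableSet.iUnion fun i => (hf i).1, by
          rw [hiUnion f fun i => (hf i).1, Set.preimage_iUnion]
          exact Set.iUnion_congr fun i => (hf i).2⟩)) :=
    MeasurableSpace.generateFrom_le (by rintro _ ⟨n, rfl⟩; exact ⟨hUmeas n, hfU n⟩)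
  exact ⟨g, F, fun X hX => ((hgen.trans hle) X hX).2⟩

end Sikorski

end SikorskiAux

noncomputable section

variable {H : Type*} [NormedAddCommGroup H] [InnerProductSpace ℂ H] [CompleteSpace H]

/-- If `E₁` and `E₂` arise from an observable `E` via σ-homomorphisms
`h₁, h₂` of the Borel σ-algebras, then `(X,Y) ↦ E(h₁(X) ∩ h₂(Y))` is a positive
operator bimeasure, and `E₁` and `E₂` are functionally coexistent. -/
theorem sigmaHom_coexistence
    {Ω₁ : Type*} [TopologicalSpace Ω₁] [LocallyCompactSpace Ω₁]
    [TopologicalSpace.MetrizableSpace Ω₁] [TopologicalSpace.SeparableSpace Ω₁]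
    [MeasurableSpace Ω₁] [BorelSpace Ω₁]
    {Ω₂ : Type*} [TopologicalSpace Ω₂] [LocallyCompactSpace Ω₂]
    [TopologicalSpace.MetrizableSpace Ω₂] [TopologicalSpace.SeparableSpace Ω₂]
    [MeasurableSpace Ω₂] [BorelSpace Ω₂]
    {Ω : Type*} [TopologicalSpace Ω] [LocallyCompactSpace Ω]
    [TopologicalSpace.MetrizableSpace Ω] [TopologicalSpace.SeparableSpace Ω]
    [MeasurableSpace Ω] [BorelSpace Ω]
    (E₁ : Observable Ω₁ H) (E₂ : Observable Ω₂ H) (E : Observable Ω H)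
    (h₁ : Set Ω₁ → Set Ω) (h₂ : Set Ω₂ → Set Ω)
    (h₁meas : ∀ X : Set Ω₁, MeasurableSet X → MeasurableSet (h₁ X))
    (h₂meas : ∀ Y : Set Ω₂, MeasurableSet Y → MeasurableSet (h₂ Y))
    (h₁univ : h₁ Set.univ = Set.univ) (h₂univ : h₂ Set.univ = Set.univ)
    (h₁compl : ∀ X : Set Ω₁, MeasurableSet X → h₁ Xᶜ = (h₁ X)ᶜ)
    (h₂compl : ∀ Y : Set Ω₂, MeasurableSet Y → h₂ Yᶜ = (h₂ Y)ᶜ)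
    (h₁iUnion : ∀ f : ℕ → Set Ω₁, (∀ i, MeasurableSet (f i)) →
      h₁ (⋃ i, f i) = ⋃ i, h₁ (f i))
    (h₂iUnion : ∀ g : ℕ → Set Ω₂, (∀ i, MeasurableSet (g i)) →
      h₂ (⋃ i, g i) = ⋃ i, h₂ (g i))
    (hE₁ : ∀ X : Set Ω₁, MeasurableSet X → E₁.toFun X = E.toFun (h₁ X))
    (hE₂ : ∀ Y : Set Ω₂, MeasurableSet Y → E₂.toFun Y = E.toFun (h₂ Y)) :
    IsPOBimeasure (fun (X : Set Ω₁) (Y : Set Ω₂) => E.toFun (h₁ X ∩ h₂ Y)) ∧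
    FunctionallyCoexistent E₁ E₂ := by
  classical
  constructor
  · refine ⟨?_, ?_, ?_⟩
    · intro X Y hX hY
      exact E.pos _ ((h₁meas X hX).inter (h₂meas Y hY))
    · intro Y hY f hf hd φ
      have hmF : ∀ i, MeasurableSet (h₁ (f i) ∩ h₂ Y) := fun i =>
        (h₁meas _ (hf i)).inter (h₂meas Y hY)
      have hdF : Pairwise (Function.onFun Disjoint fun i => h₁ (f i) ∩ h₂ Y) := by
        intro i j hij
        have hij2 : h₁ (f i) ∩ h₁ (f j) = ∅ := by
          rw [← sh_inter₂ h₁ h₁compl h₁iUnion _ _ (hf i) (hf j),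
            Set.disjoint_iff_inter_eq_empty.mp (hd hij), sh_empty h₁ h₁univ h₁compl]
        refine Set.disjoint_left.mpr fun x hx hx' => ?_
        have hmem : x ∈ h₁ (f i) ∩ h₁ (f j) := ⟨hx.1, hx'.1⟩
        rw [hij2] at hmem
        exact hmem
      have hsum := E.sigmaAdditive _ hmF hdF φ
      have hU : (⋃ i, h₁ (f i) ∩ h₂ Y) = h₁ (⋃ i, f i) ∩ h₂ Y := by
        rw [h₁iUnion f hf, Set.iUnion_inter]
      rwa [hU] at hsum
    · intro X hX g hg hd φ
      have hmF : ∀ i, MeasurableSet (h₁ X ∩ h₂ (g i)) := fun i =>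
        (h₁meas X hX).inter (h₂meas _ (hg i))
      have hdF : Pairwise (Function.onFun Disjoint fun i => h₁ X ∩ h₂ (g i)) := by
        intro i j hij
        have hij2 : h₂ (g i) ∩ h₂ (g j) = ∅ := by
          rw [← sh_inter₂ h₂ h₂compl h₂iUnion _ _ (hg i) (hg j),
            Set.disjoint_iff_inter_eq_empty.mp (hd hij), sh_empty h₂ h₂univ h₂compl]
        refine Set.disjoint_left.mpr fun x hx hx' => ?_
        have hmem : x ∈ h₂ (g i) ∩ h₂ (g j) := ⟨hx.2, hx'.2⟩
        rw [hij2] at hmem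
        exact hmem
      have hsum := E.sigmaAdditive _ hmF hdF φ
      have hU : (⋃ i, h₁ X ∩ h₂ (g i)) = h₁ X ∩ h₂ (⋃ i, g i) := by
        rw [h₂iUnion g hg, Set.inter_iUnion]
      rwa [hU] at hsum
  · rcases isEmpty_or_nonempty Ω with hΩ | hΩ
    · -- `Ω` empty forces `H` to be trivial; use the empty carrier.
      haveI : Subsingleton (Set Ω) := ⟨fun a b => by ext x; exact (IsEmpty.false x).elim⟩
      have hz : ∀ φ : H, φ = 0 := by
        intro φ
        have h1 : E.toFun (∅ : Set Ω) = 1 := by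
          rw [Subsingleton.elim (∅ : Set Ω) Set.univ, E.normalized]
        have hsum := E.sigmaAdditive (fun _ => (∅ : Set Ω))
          (fun _ => MeasurableSet.empty)
          (fun i j hij => by simp [Function.onFun]) φ
        have h2 : (⋃ _ : ℕ, (∅ : Set Ω)) = (∅ : Set Ω) := by simp
        rw [h2, h1] at hsum
        have h3 : ev (1 : H →L[ℂ] H) φ = 0 :=
          tendsto_nhds_unique tendsto_const_nhds hsum.summable.tendsto_atTop_zero
        have h4 : @inner ℂ H _ φ φ = 0 := by
          simpa [ev, ContinuousLinearMap.one_apply] using h3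
        exact inner_self_eq_zero.mp h4
      haveI : Subsingleton H := ⟨fun a b => by rw [hz a, hz b]⟩
      haveI : Subsingleton (H →L[ℂ] H) :=
        ⟨fun a b => by ext x; exact Subsingleton.elim _ _⟩
      have hev0 : ∀ (T : H →L[ℂ] H) (φ : H), ev T φ = 0 := by
        intro T φ
        rw [hz φ]
        simp [ev]
      refine ⟨Empty, ⊤,
        @Observable.mk Empty ⊤ H _ _ _ (fun _ => E.toFun Set.univ)
          (fun _ _ => E.pos _ MeasurableSet.univ) E.normalized ?_,
        fun x => x.elim, fun x => x.elim, ?_, ?_, ?_, ?_⟩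
      · intro f hf hd φ
        simp only [hev0]
        exact hasSum_zero
      · intro s hs
        exact MeasurableSpace.measurableSet_top
      · intro s hs
        exact MeasurableSpace.measurableSet_top
      · intro X hX
        exact Subsingleton.elim _ _
      · intro Y hY
        exact Subsingleton.elim _ _
    · obtain ⟨g₁, F₁, hS₁⟩ := sikorski_factor hΩ h₁ h₁univ h₁compl h₁iUnion
      obtain ⟨g₂, F₂, hS₂⟩ := sikorski_factor hΩ h₂ h₂univ h₂compl h₂iUnion
      set G : Ω → ℕ → Bool := fun ω n =>
        if n % 2 = 0 then g₁ ω (n / 2) else g₂ ω (n / 2) with hGdef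
      set p₁ : (ℕ → Bool) → Ω₁ := fun s => F₁ (fun k => s (2 * k)) with hp₁def
      set p₂ : (ℕ → Bool) → Ω₂ := fun s => F₂ (fun k => s (2 * k + 1)) with hp₂def
      have hc₁ : ∀ ω, p₁ (G ω) = F₁ (g₁ ω) := by
        intro ω
        simp only [hp₁def, hGdef]
        congr 1
        funext k
        have e1 : (2 * k) % 2 = 0 := by omega
        have e2 : (2 * k) / 2 = k := by omega
        simp [e1, e2]
      have hc₂ : ∀ ω, p₂ (G ω) = F₂ (g₂ ω) := by
        intro ω
        simp only [hp₂def, hGdef]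
        congr 1
        funext k
        have e1 : ¬ ((2 * k + 1) % 2 = 0) := by omega
        have e2 : (2 * k + 1) / 2 = k := by omega
        simp [e1, e2]
      have hpre₁ : ∀ X : Set Ω₁, G ⁻¹' (p₁ ⁻¹' X) = (fun ω => F₁ (g₁ ω)) ⁻¹' X := by
        intro X
        ext ω
        simp [Set.mem_preimage, hc₁ ω]
      have hpre₂ : ∀ Y : Set Ω₂, G ⁻¹' (p₂ ⁻¹' Y) = (fun ω => F₂ (g₂ ω)) ⁻¹' Y := by
        intro Y
        ext ω
        simp [Set.mem_preimage, hc₂ ω]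
      refine ⟨(ℕ → Bool), MeasurableSpace.map G ‹MeasurableSpace Ω›,
        @Observable.mk (ℕ → Bool) (MeasurableSpace.map G ‹MeasurableSpace Ω›) H _ _ _
          (fun S => E.toFun (G ⁻¹' S)) ?_ ?_ ?_, p₁, p₂, ?_, ?_, ?_, ?_⟩
      · intro S hS
        exact E.pos _ (MeasurableSpace.map_def.mp hS)
      · show E.toFun (G ⁻¹' Set.univ) = 1
        rw [Set.preimage_univ, E.normalized]
      · intro f hf hd φ
        have := E.sigmaAdditive (fun i => G ⁻¹' (f i))
          (fun i => MeasurableSpace.map_def.mp (hf i))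
          (fun i j hij => Disjoint.preimage G (hd hij)) φ
        rwa [← Set.preimage_iUnion] at this
      · intro s hs
        rw [MeasurableSpace.map_def, hpre₁, ← hS₁ s hs]
        exact h₁meas s hs
      · intro s hs
        rw [MeasurableSpace.map_def, hpre₂, ← hS₂ s hs]
        exact h₂meas s hs
      · intro X hX
        rw [hE₁ X hX, hS₁ X hX]
        exact congrArg E.toFun (hpre₁ X).symm
      · intro Y hY
        rw [hE₂ Y hY, hS₂ Y hY]
        exact congrArg E.toFun (hpre₂ Y).symm

end
end

section
/- Let E : 𝒜 → L(H) be a regular observable. Then for all X, Y ∈ 𝒜, E(X∩Y) is the greatest lower bound of E(X) and E(Y) in ran(E) (i.e., E(X∩Y) ≤ E(X), E(X∩Y) ≤ E(Y), and any E(Z) ∈ ran(E) with E(Z) ≤ E(X) and E(Z) ≤ E(Y) satisfies E(Z) ≤ E(X∩Y)); dually, E(X∪Y) is the least upper bound of E(X) and E(Y) in ran(E). Consequently ran(E), with the order and complement A ↦ I − A inherited from the effects, is a Boolean algebra, and E : 𝒜 → ran(E) is a Boolean σ-homomorphism: in particular, for any disjoint sequence (Xᵢ) ⊂ 𝒜,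 E(⋃ᵢ Xᵢ) = ∑ᵢ E(Xᵢ) is the supremum in ran(E) of {E(Xᵢ) | i ∈ ℕ}. -/
open MeasureTheory

noncomputable section

variable {H : Type*} [NormedAddCommGroup H] [InnerProductSpace ℂ H] [CompleteSpace H]

section Aux

set_option linter.unusedSectionVars false

open ContinuousLinearMap RCLike

variable {H : Type*} [NormedAddCommGroup H] [InnerProductSpace ℂ H] [CompleteSpace H]

namespace RegBool

lemma ev_zero (φ : H) : ev (0 : H →L[ℂ] H) φ = 0 := by simp [ev]

lemma ev_sub (A B : H →L[ℂ] H) (φ : H) : ev (A - B) φ = ev A φ - ev B φ := by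
  simp [ev, inner_sub_right]

lemma ev_add (A B : H →L[ℂ] H) (φ : H) : ev (A + B) φ = ev A φ + ev B φ := by
  simp [ev, inner_add_right]

lemma op_ext {A B : H →L[ℂ] H} (h : ∀ φ, ev A φ = ev B φ) : A = B := by
  have h2 : ∀ φ : H, @inner ℂ H _ ((A - B) φ) φ = 0 := by
    intro φ
    have := sub_eq_zero.2 (h φ)
    rw [← ev_sub] at this
    have : (starRingEnd ℂ) (ev (A - B) φ) = 0 := by rw [this]; simp
    rwa [ev, inner_conj_symm] at this
  have := (inner_map_self_eq_zero ((A - B) : H →ₗ[ℂ] H)).mp (by exact h2)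
  have hAB : (A - B : H →L[ℂ] H) = 0 := by
    ext x
    have := LinearMap.congr_fun this x
    simpa using this
  exact sub_eq_zero.mp hAB

lemma isPos_neg_eq_zero {A : H →L[ℂ] H} (h1 : A.IsPositive) (h2 : (-A).IsPositive) : A = 0 := by
  apply op_ext
  intro φ
  have hre : re (@inner ℂ H _ (A φ) φ) = 0 := by
    have p1 := h1.2 φ
    have p2 := h2.2 φ
    rw [reApplyInnerSelf, neg_apply, inner_neg_left, map_neg] at p2
    rw [reApplyInnerSelf] at p1
    linarith
  have hsymm := h1.1
  have hreal : ((A.reApplyInnerSelf φ : ℝ) : ℂ) = @inner ℂ H _ (A φ) φ :=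
    hsymm.coe_reApplyInnerSelf_apply φ
  rw [reApplyInnerSelf_apply] at hreal
  rw [ev_zero, ev, ← inner_conj_symm, ← hreal, hre]
  simp

lemma opLE_refl' (A : H →L[ℂ] H) : (A - A).IsPositive := by
  rw [sub_self]; exact isPositive_zero

lemma opLE_trans' {A B C : H →L[ℂ] H} (h1 : (B - A).IsPositive) (h2 : (C - B).IsPositive) :
    (C - A).IsPositive := by
  have := h2.add h1
  rwa [show C - B + (B - A) = C - A by abel] at this


variable {Ω : Type*} [MeasurableSpace Ω] (E : Observable Ω H)

lemma obs_empty : E.toFun ∅ = 0 := by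
  apply op_ext
  intro φ
  have h := E.sigmaAdditive (fun _ => ∅) (fun _ => MeasurableSet.empty)
    (fun i j _ => by simp [Function.onFun]) φ
  rw [Set.iUnion_empty] at h
  have h0 : ev (E.toFun ∅) φ = 0 := by
    have ht := h.summable.tendsto_atTop_zero
    exact tendsto_nhds_unique tendsto_const_nhds ht
  rw [h0, ev_zero]

lemma obs_add {X Y : Set Ω} (hX : MeasurableSet X) (hY : MeasurableSet Y)
    (hd : Disjoint X Y) : E.toFun (X ∪ Y) = E.toFun X + E.toFun Y := by
  classical
  set f : ℕ → Set Ω := fun n => if n = 0 then X else if n = 1 then Y else ∅ with hf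
  have f0 : f 0 = X := rfl
  have f1 : f 1 = Y := rfl
  have fo : ∀ i, i ≠ 0 → i ≠ 1 → f i = ∅ := by
    intro i h0 h1; simp [hf, h0, h1]
  have hmeas : ∀ i, MeasurableSet (f i) := by
    intro i
    by_cases h0 : i = 0
    · rw [h0, f0]; exact hX
    by_cases h1 : i = 1
    · rw [h1, f1]; exact hY
    rw [fo i h0 h1]; exact MeasurableSet.empty
  have hdis : Pairwise (Function.onFun Disjoint f) := by
    intro i j hij
    unfold Function.onFun
    by_cases hi0 : i = 0 <;> by_cases hi1 : i = 1 <;> by_cases hj0 : j = 0 <;>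
      by_cases hj1 : j = 1 <;>
      first
        | (exfalso; omega)
        | (subst_vars; first
            | (rw [f0, f1]; exact hd)
            | (rw [f1, f0]; exact hd.symm)
            | (rw [fo i hi0 hi1]; exact disjoint_bot_left)
            | (rw [fo j hj0 hj1]; exact disjoint_bot_right))
  have hU : (⋃ i, f i) = X ∪ Y := by
    apply Set.Subset.antisymm
    · refine Set.iUnion_subset fun i => ?_
      by_cases h0 : i = 0 <;> by_cases h1 : i = 1 <;> simp [hf, h0, h1]
    · refine Set.union_subset ?_ ?_
      · have : f 0 = X := by simp [hf]
        exact this ▸ Set.subset_iUnion f 0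
      · have : f 1 = Y := by simp [hf]
        exact this ▸ Set.subset_iUnion f 1
  apply op_ext
  intro φ
  have h := E.sigmaAdditive f hmeas hdis φ
  rw [hU] at h
  have h2 : HasSum (fun i => ev (E.toFun (f i)) φ) (ev (E.toFun X) φ + ev (E.toFun Y) φ) := by
    have hx : HasSum (fun i : ℕ => if i = 0 then ev (E.toFun X) φ else 0) (ev (E.toFun X) φ) :=
      hasSum_ite_eq 0 _
    have hy : HasSum (fun i : ℕ => if i = 1 then ev (E.toFun Y) φ else 0) (ev (E.toFun Y) φ) :=
      hasSum_ite_eq 1 _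
    have := hx.add hy
    convert this using 1
    funext i
    by_cases h0 : i = 0
    · rw [h0, f0]; simp
    by_cases h1 : i = 1
    · rw [h1, f1]; simp [h0]
    rw [fo i h0 h1, obs_empty, ev_zero]; simp [h0, h1]
  rw [ev_add]
  exact h.unique h2

lemma obs_compl {X : Set Ω} (hX : MeasurableSet X) :
    E.toFun Xᶜ = 1 - E.toFun X := by
  have h := obs_add E hX hX.compl disjoint_compl_right
  rw [Set.union_compl_self, E.normalized] at h
  rw [eq_sub_iff_add_eq, add_comm, h]

lemma obs_mono {X Y : Set Ω} (hX : MeasurableSet X) (hY : MeasurableSet Y) (hXY : X ⊆ Y) :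
    (E.toFun Y - E.toFun X).IsPositive := by
  have h : E.toFun Y = E.toFun X + E.toFun (Y \ X) := by
    rw [← obs_add E hX (hY.diff hX) Set.disjoint_sdiff_right, Set.union_diff_cancel hXY]
  rw [h, add_sub_cancel_left]
  exact E.pos _ (hY.diff hX)

lemma obs_null_mono {X N : Set Ω} (hX : MeasurableSet X) (hN : MeasurableSet N)
    (hsub : X ⊆ N) (h : E.toFun N = 0) : E.toFun X = 0 := by
  have hm := obs_mono E hX hN hsub
  rw [h, zero_sub] at hm
  exact isPos_neg_eq_zero (E.pos X hX) hm

lemma obs_null_union {X Y : Set Ω} (hX : MeasurableSet X) (hY : MeasurableSet Y)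
    (h1 : E.toFun X = 0) (h2 : E.toFun Y = 0) : E.toFun (X ∪ Y) = 0 := by
  rw [← Set.union_diff_self, obs_add E hX (hY.diff hX) Set.disjoint_sdiff_right, h1,
    obs_null_mono E (hY.diff hX) hY Set.diff_subset h2, add_zero]

lemma obs_split {Z S : Set Ω} (hZ : MeasurableSet Z) (hS : MeasurableSet S) :
    E.toFun Z = E.toFun (Z ∩ S) + E.toFun (Z ∩ Sᶜ) := by
  rw [← obs_add E (hZ.inter hS) (hZ.inter hS.compl)
    (Disjoint.mono Set.inter_subset_right Set.inter_subset_right disjoint_compl_right),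
    Set.inter_union_compl]

lemma obs_null_iUnion (f : ℕ → Set Ω) (hmeas : ∀ i, MeasurableSet (f i))
    (hdis : Pairwise (Function.onFun Disjoint f)) (h : ∀ i, E.toFun (f i) = 0) :
    E.toFun (⋃ i, f i) = 0 := by
  apply op_ext
  intro φ
  have hs := E.sigmaAdditive f hmeas hdis φ
  have : (fun i => ev (E.toFun (f i)) φ) = fun _ => (0 : ℂ) := by
    funext i; rw [h i, ev_zero]
  rw [this] at hs
  rw [hs.unique hasSum_zero, ev_zero]

def opLE' (A B : H →L[ℂ] H) : Prop := (B - A).IsPositive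

lemma pos_half_smul {T : H →L[ℂ] H} (hT : T.IsPositive) : (((1/2:ℂ))•T).IsPositive := by
  constructor
  · rw [← isSelfAdjoint_iff_isSymmetric, IsSelfAdjoint, star_smul, hT.isSelfAdjoint.star_eq]
    norm_num
  · intro x
    rw [reApplyInnerSelf_apply, smul_apply, inner_smul_left]
    have h := hT.2 x
    rw [reApplyInnerSelf_apply] at h
    simp only [Complex.mul_re, map_div₀, map_one, map_ofNat]
    norm_num
    positivity

abbrev RegHyp : Prop := ∀ X : Set Ω, MeasurableSet X → E.toFun X ≠ 0 → E.toFun X ≠ 1 →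
    ¬ ((1/2:ℂ)•(1 : H →L[ℂ] H) - E.toFun X).IsPositive ∧
    ¬ (E.toFun X - (1/2:ℂ)•(1 : H →L[ℂ] H)).IsPositive

lemma regHyp_of_regular (hreg : E.Regular) : RegHyp E := fun X hX h0 h1 => hreg X hX h0 h1

lemma reg_null (hreg : RegHyp E) {Z X : Set Ω} (hZ : MeasurableSet Z) (hX : MeasurableSet X)
    (h : (E.toFun X - E.toFun Z).IsPositive) : E.toFun (Z ∩ Xᶜ) = 0 := by
  set W := Z ∩ Xᶜ with hWdef
  have hW : MeasurableSet W := hZ.inter hX.compl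
  set A := E.toFun W with hAdef
  have hA1 : (E.toFun X - A).IsPositive :=
    opLE_trans' (obs_mono E hW hZ Set.inter_subset_left) h
  have hA2 : ((1 - E.toFun X) - A).IsPositive := by
    have := obs_mono E hW hX.compl Set.inter_subset_right
    rwa [obs_compl E hX] at this
  have hhalf : ((1/2:ℂ)•(1 : H →L[ℂ] H) - A).IsPositive := by
    have hsum := hA1.add hA2
    have heq : (1/2:ℂ) • ((E.toFun X - A) + ((1 - E.toFun X) - A))
        = (1/2:ℂ)•(1 : H →L[ℂ] H) - A := by module
    exact heq ▸ pos_half_smul hsum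
  by_cases hA0 : A = 0
  · exact hA0
  by_cases hA1' : A = 1
  · have hall : ∀ φ : H, φ = 0 := by
      intro φ
      have hp := hhalf.2 φ
      rw [hA1'] at hp
      rw [reApplyInnerSelf_apply] at hp
      have hc : (((1/2:ℂ)•(1 : H →L[ℂ] H) - 1) φ) = ((1/2:ℂ) - 1) • φ := by
        simp [sub_smul]
      rw [hc, inner_smul_left] at hp
      have hns : @inner ℂ H _ φ φ = ((‖φ‖^2 : ℝ) : ℂ) := by
        rw [@inner_self_eq_norm_sq_to_K ℂ]; norm_num
      rw [hns] at hp
      have : re (((starRingEnd ℂ) ((1/2:ℂ) - 1)) * ((‖φ‖^2 : ℝ) : ℂ)) = -(1/2) * ‖φ‖^2 := by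
        simp [Complex.mul_re, ← Complex.ofReal_pow]
        ring
      rw [this] at hp
      have : ‖φ‖ = 0 := by nlinarith [sq_nonneg ‖φ‖]
      simpa using this
    have : A = 0 := by
      ext φ; rw [hall φ]; simp
    exact this
  · obtain ⟨hc, -⟩ := hreg W hW hA0 hA1'
    exact absurd hhalf hc

lemma le_inter (hreg : RegHyp E) {Z X Y : Set Ω} (hZ : MeasurableSet Z) (hX : MeasurableSet X)
    (hY : MeasurableSet Y) (h1 : (E.toFun X - E.toFun Z).IsPositive)
    (h2 : (E.toFun Y - E.toFun Z).IsPositive) :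
    (E.toFun (X ∩ Y) - E.toFun Z).IsPositive := by
  have n1 := reg_null E hreg hZ hX h1
  have n2 := reg_null E hreg hZ hY h2
  have nU : E.toFun ((Z ∩ Xᶜ) ∪ (Z ∩ Yᶜ)) = 0 :=
    obs_null_union E (hZ.inter hX.compl) (hZ.inter hY.compl) n1 n2
  have n : E.toFun (Z ∩ (X ∩ Y)ᶜ) = 0 := by
    apply obs_null_mono E (hZ.inter (hX.inter hY).compl)
      ((hZ.inter hX.compl).union (hZ.inter hY.compl)) _ nU
    rw [Set.compl_inter, Set.inter_union_distrib_left]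
  have hsplit := obs_split E hZ (hX.inter hY)
  rw [n, add_zero] at hsplit
  rw [hsplit]
  exact obs_mono E (hZ.inter (hX.inter hY)) (hX.inter hY) Set.inter_subset_right

lemma le_union (hreg : RegHyp E) {Z X Y : Set Ω} (hZ : MeasurableSet Z) (hX : MeasurableSet X)
    (hY : MeasurableSet Y) (h1 : (E.toFun Z - E.toFun X).IsPositive)
    (h2 : (E.toFun Z - E.toFun Y).IsPositive) :
    (E.toFun Z - E.toFun (X ∪ Y)).IsPositive := by
  have c1 : (E.toFun Xᶜ - E.toFun Zᶜ).IsPositive := by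
    rw [obs_compl E hX, obs_compl E hZ, show (1 - E.toFun X) - (1 - E.toFun Z)
      = E.toFun Z - E.toFun X by abel]
    exact h1
  have c2 : (E.toFun Yᶜ - E.toFun Zᶜ).IsPositive := by
    rw [obs_compl E hY, obs_compl E hZ, show (1 - E.toFun Y) - (1 - E.toFun Z)
      = E.toFun Z - E.toFun Y by abel]
    exact h2
  have := le_inter E hreg hZ.compl hX.compl hY.compl c1 c2
  rw [← Set.compl_union] at this
  rw [obs_compl E (hX.union hY), obs_compl E hZ] at this
  rw [show E.toFun Z - E.toFun (X ∪ Y)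
    = (1 - E.toFun (X ∪ Y)) - (1 - E.toFun Z) by abel]
  exact this

lemma inter_congr_left (hreg : RegHyp E) {X X' Y : Set Ω} (hX : MeasurableSet X) (hX' : MeasurableSet X')
    (hY : MeasurableSet Y) (h : E.toFun X = E.toFun X') :
    E.toFun (X ∩ Y) = E.toFun (X' ∩ Y) := by
  have key : ∀ U U' V : Set Ω, MeasurableSet U → MeasurableSet U' → MeasurableSet V →
      E.toFun U = E.toFun U' → E.toFun (U ∩ V) = E.toFun (U ∩ V ∩ U') := by
    intro U U' V hU hU' hV hE
    have hle : (E.toFun U' - E.toFun U).IsPositive := by rw [hE]; exact opLE_refl' _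
    have hnull : E.toFun (U ∩ U'ᶜ) = 0 := reg_null E hreg hU hU' hle
    have hn2 : E.toFun (U ∩ V ∩ U'ᶜ) = 0 :=
      obs_null_mono E ((hU.inter hV).inter hU'.compl) (hU.inter hU'.compl)
        (by intro x hx; exact ⟨hx.1.1, hx.2⟩) hnull
    have hs := obs_split E (hU.inter hV) hU'
    rw [hn2, add_zero] at hs
    exact hs
  have h1 := key X X' Y hX hX' hY h
  have h2 := key X' X Y hX' hX hY h.symm
  rw [h1, h2, show X ∩ Y ∩ X' = X' ∩ Y ∩ X by ext x; simp; tauto]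

lemma inter_congr (hreg : RegHyp E) {X X' Y Y' : Set Ω} (hX : MeasurableSet X) (hX' : MeasurableSet X')
    (hY : MeasurableSet Y) (hY' : MeasurableSet Y')
    (h1 : E.toFun X = E.toFun X') (h2 : E.toFun Y = E.toFun Y') :
    E.toFun (X ∩ Y) = E.toFun (X' ∩ Y') := by
  rw [inter_congr_left E hreg hX hX' hY h1, Set.inter_comm, Set.inter_comm X',
    inter_congr_left E hreg hY hY' hX' h2]

lemma union_congr (hreg : RegHyp E) {X X' Y Y' : Set Ω} (hX : MeasurableSet X) (hX' : MeasurableSet X')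
    (hY : MeasurableSet Y) (hY' : MeasurableSet Y')
    (h1 : E.toFun X = E.toFun X') (h2 : E.toFun Y = E.toFun Y') :
    E.toFun (X ∪ Y) = E.toFun (X' ∪ Y') := by
  have hc1 : E.toFun Xᶜ = E.toFun X'ᶜ := by rw [obs_compl E hX, obs_compl E hX', h1]
  have hc2 : E.toFun Yᶜ = E.toFun Y'ᶜ := by rw [obs_compl E hY, obs_compl E hY', h2]
  have := inter_congr E hreg hX.compl hX'.compl hY.compl hY'.compl hc1 hc2
  rw [← Set.compl_union, ← Set.compl_union] at this
  rw [obs_compl E (hX.union hY), obs_compl E (hX'.union hY')] at this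
  exact sub_right_injective this

lemma opLE_antisymm' {A B : H →L[ℂ] H} (h1 : (B - A).IsPositive) (h2 : (A - B).IsPositive) :
    A = B := by
  have : (-(B - A)).IsPositive := by rwa [neg_sub]
  have h0 := isPos_neg_eq_zero h1 this
  rw [sub_eq_zero] at h0
  exact h0.symm

lemma exists_rep (a : ↥(E.ran)) :
    ∃ X : Set Ω, MeasurableSet X ∧ (a : H →L[ℂ] H) = E.toFun X := a.2

def rep (a : ↥(E.ran)) : Set Ω := (exists_rep E a).choose

lemma mrep (a : ↥(E.ran)) : MeasurableSet (rep E a) := (exists_rep E a).choose_spec.1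

lemma hrep (a : ↥(E.ran)) : (a : H →L[ℂ] H) = E.toFun (rep E a) := (exists_rep E a).choose_spec.2

def esup (a b : ↥(E.ran)) : ↥(E.ran) :=
  ⟨E.toFun (rep E a ∪ rep E b), rep E a ∪ rep E b, (mrep E a).union (mrep E b), rfl⟩

def einf (a b : ↥(E.ran)) : ↥(E.ran) :=
  ⟨E.toFun (rep E a ∩ rep E b), rep E a ∩ rep E b, (mrep E a).inter (mrep E b), rfl⟩

def ecompl (a : ↥(E.ran)) : ↥(E.ran) :=
  ⟨E.toFun (rep E a)ᶜ, (rep E a)ᶜ, (mrep E a).compl, rfl⟩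

def ranBA (hreg : RegHyp E) : BooleanAlgebra ↥(E.ran) where
  le a b := (((b : H →L[ℂ] H)) - (a : H →L[ℂ] H)).IsPositive
  le_refl a := opLE_refl' _
  le_trans a b c h1 h2 := opLE_trans' h1 h2
  le_antisymm a b h1 h2 := Subtype.ext (opLE_antisymm' h1 h2)
  sup := esup E
  inf := einf E
  compl := ecompl E
  top := ⟨E.toFun Set.univ, Set.univ, MeasurableSet.univ, rfl⟩
  bot := ⟨E.toFun ∅, ∅, MeasurableSet.empty, rfl⟩
  le_sup_left a b := by
    show ((esup E a b : H →L[ℂ] H) - (a : H →L[ℂ] H)).IsPositive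
    rw [hrep E a]
    exact obs_mono E (mrep E a) ((mrep E a).union (mrep E b)) Set.subset_union_left
  le_sup_right a b := by
    show ((esup E a b : H →L[ℂ] H) - (b : H →L[ℂ] H)).IsPositive
    rw [hrep E b]
    exact obs_mono E (mrep E b) ((mrep E a).union (mrep E b)) Set.subset_union_right
  sup_le a b c h1 h2 := by
    have h1' : ((c : H →L[ℂ] H) - (a : H →L[ℂ] H)).IsPositive := h1
    have h2' : ((c : H →L[ℂ] H) - (b : H →L[ℂ] H)).IsPositive := h2
    show ((c : H →L[ℂ] H) - (esup E a b : H →L[ℂ] H)).IsPositive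
    rw [hrep E c] at h1' h2' ⊢
    rw [hrep E a] at h1'
    rw [hrep E b] at h2'
    exact le_union E hreg (mrep E c) (mrep E a) (mrep E b) h1' h2'
  inf_le_left a b := by
    show ((a : H →L[ℂ] H) - (einf E a b : H →L[ℂ] H)).IsPositive
    rw [hrep E a]
    exact obs_mono E ((mrep E a).inter (mrep E b)) (mrep E a) Set.inter_subset_left
  inf_le_right a b := by
    show ((b : H →L[ℂ] H) - (einf E a b : H →L[ℂ] H)).IsPositive
    rw [hrep E b]
    exact obs_mono E ((mrep E a).inter (mrep E b)) (mrep E b) Set.inter_subset_right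
  le_inf a b c h1 h2 := by
    have h1' : ((b : H →L[ℂ] H) - (a : H →L[ℂ] H)).IsPositive := h1
    have h2' : ((c : H →L[ℂ] H) - (a : H →L[ℂ] H)).IsPositive := h2
    show ((einf E b c : H →L[ℂ] H) - (a : H →L[ℂ] H)).IsPositive
    rw [hrep E a] at h1' h2' ⊢
    rw [hrep E b] at h1'
    rw [hrep E c] at h2'
    exact le_inter E hreg (mrep E a) (mrep E b) (mrep E c) h1' h2'
  le_sup_inf x y z := by
    show ((esup E x (einf E y z) : H →L[ℂ] H) -
      (einf E (esup E x y) (esup E x z) : H →L[ℂ] H)).IsPositive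
    show (E.toFun (rep E x ∪ rep E (einf E y z)) -
      E.toFun (rep E (esup E x y) ∩ rep E (esup E x z))).IsPositive
    have hxy : E.toFun (rep E (esup E x y)) = E.toFun (rep E x ∪ rep E y) :=
      (hrep E (esup E x y)).symm
    have hxz : E.toFun (rep E (esup E x z)) = E.toFun (rep E x ∪ rep E z) :=
      (hrep E (esup E x z)).symm
    have hyz : E.toFun (rep E (einf E y z)) = E.toFun (rep E y ∩ rep E z) :=
      (hrep E (einf E y z)).symm
    rw [inter_congr E hreg (mrep E (esup E x y)) ((mrep E x).union (mrep E y))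
      (mrep E (esup E x z)) ((mrep E x).union (mrep E z)) hxy hxz]
    rw [union_congr E hreg (mrep E x) (mrep E x) (mrep E (einf E y z))
      ((mrep E y).inter (mrep E z)) rfl hyz]
    rw [show rep E x ∪ rep E y ∩ rep E z = (rep E x ∪ rep E y) ∩ (rep E x ∪ rep E z) from
      Set.union_inter_distrib_left _ _ _]
    exact opLE_refl' _
  inf_compl_le_bot x := by
    show (E.toFun ∅ - (einf E x (ecompl E x) : H →L[ℂ] H)).IsPositive
    show (E.toFun ∅ - E.toFun (rep E x ∩ rep E (ecompl E x))).IsPositive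
    have hc : E.toFun (rep E (ecompl E x)) = E.toFun (rep E x)ᶜ := (hrep E (ecompl E x)).symm
    rw [inter_congr E hreg (mrep E x) (mrep E x) (mrep E (ecompl E x)) (mrep E x).compl rfl hc]
    rw [Set.inter_compl_self]
    exact opLE_refl' _
  top_le_sup_compl x := by
    show ((esup E x (ecompl E x) : H →L[ℂ] H) - E.toFun Set.univ).IsPositive
    show (E.toFun (rep E x ∪ rep E (ecompl E x)) - E.toFun Set.univ).IsPositive
    have hc : E.toFun (rep E (ecompl E x)) = E.toFun (rep E x)ᶜ := (hrep E (ecompl E x)).symm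
    rw [union_congr E hreg (mrep E x) (mrep E x) (mrep E (ecompl E x)) (mrep E x).compl rfl hc]
    rw [Set.union_compl_self]
    exact opLE_refl' _
  le_top a := by
    show (E.toFun Set.univ - (a : H →L[ℂ] H)).IsPositive
    rw [hrep E a]
    exact obs_mono E (mrep E a) MeasurableSet.univ (Set.subset_univ _)
  bot_le a := by
    show ((a : H →L[ℂ] H) - E.toFun ∅).IsPositive
    rw [hrep E a]
    exact obs_mono E MeasurableSet.empty (mrep E a) (Set.empty_subset _)

lemma sigma_ub (hreg : RegHyp E) (f : ℕ → Set Ω) (hmeas : ∀ i, MeasurableSet (f i))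
    (hdis : Pairwise (Function.onFun Disjoint f)) {Z : Set Ω} (hZ : MeasurableSet Z)
    (h : ∀ i, (E.toFun Z - E.toFun (f i)).IsPositive) :
    (E.toFun Z - E.toFun (⋃ i, f i)).IsPositive := by
  have hU : MeasurableSet (⋃ i, f i) := MeasurableSet.iUnion hmeas
  have n : ∀ i, E.toFun (f i ∩ Zᶜ) = 0 := fun i => reg_null E hreg (hmeas i) hZ (h i)
  have hdis' : Pairwise (Function.onFun Disjoint (fun i => f i ∩ Zᶜ)) := fun i j hij =>
    (hdis hij).mono Set.inter_subset_left Set.inter_subset_left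
  have nU : E.toFun (⋃ i, f i ∩ Zᶜ) = 0 :=
    obs_null_iUnion E _ (fun i => (hmeas i).inter hZ.compl) hdis' n
  rw [← Set.iUnion_inter] at nU
  have hs := obs_split E hU hZ
  rw [nU, add_zero] at hs
  rw [hs]
  exact obs_mono E (hU.inter hZ) hZ Set.inter_subset_right

end RegBool

end Aux

/-- For a regular observable `E`, `E(X ∩ Y)` is the greatest lower bound and
`E(X ∪ Y)` the least upper bound of `E(X)`, `E(Y)` in `ran(E)`; consequently `ran(E)` is a
Boolean algebra and `E` is a Boolean σ-homomorphism: for disjoint sequences,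
`E(⋃ᵢ Xᵢ) = ∑ᵢ E(Xᵢ)` is the supremum in `ran(E)` of the `E(Xᵢ)`. -/
theorem regular_range_is_boolean
    {Ω : Type*} [MeasurableSpace Ω] (E : Observable Ω H) (hreg : E.Regular) :
    (∀ X Y : Set Ω, MeasurableSet X → MeasurableSet Y →
      opLE (E.toFun (X ∩ Y)) (E.toFun X) ∧ opLE (E.toFun (X ∩ Y)) (E.toFun Y) ∧
      (∀ Z : Set Ω, MeasurableSet Z → opLE (E.toFun Z) (E.toFun X) →
        opLE (E.toFun Z) (E.toFun Y) → opLE (E.toFun Z) (E.toFun (X ∩ Y)))) ∧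
    (∀ X Y : Set Ω, MeasurableSet X → MeasurableSet Y →
      opLE (E.toFun X) (E.toFun (X ∪ Y)) ∧ opLE (E.toFun Y) (E.toFun (X ∪ Y)) ∧
      (∀ Z : Set Ω, MeasurableSet Z → opLE (E.toFun X) (E.toFun Z) →
        opLE (E.toFun Y) (E.toFun Z) → opLE (E.toFun (X ∪ Y)) (E.toFun Z))) ∧
    RanIsBoolean E ∧
    (∀ f : ℕ → Set Ω, (∀ i, MeasurableSet (f i)) → Pairwise (Function.onFun Disjoint f) →
      (∀ φ : H, HasSum (fun i => ev (E.toFun (f i)) φ) (ev (E.toFun (⋃ i, f i)) φ)) ∧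
      (∀ i, opLE (E.toFun (f i)) (E.toFun (⋃ i, f i))) ∧
      (∀ Z : Set Ω, MeasurableSet Z → (∀ i, opLE (E.toFun (f i)) (E.toFun Z)) →
        opLE (E.toFun (⋃ i, f i)) (E.toFun Z))) := by
  have hreg' : RegBool.RegHyp E := RegBool.regHyp_of_regular E hreg
  refine ⟨?_, ?_, ?_, ?_⟩
  · intro X Y hX hY
    refine ⟨RegBool.obs_mono E (hX.inter hY) hX Set.inter_subset_left,
      RegBool.obs_mono E (hX.inter hY) hY Set.inter_subset_right, ?_⟩
    intro Z hZ h1 h2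
    exact RegBool.le_inter E hreg' hZ hX hY h1 h2
  · intro X Y hX hY
    refine ⟨RegBool.obs_mono E hX (hX.union hY) Set.subset_union_left,
      RegBool.obs_mono E hY (hX.union hY) Set.subset_union_right, ?_⟩
    intro Z hZ h1 h2
    exact RegBool.le_union E hreg' hZ hX hY h1 h2
  · refine ⟨RegBool.ranBA E hreg', fun a b => Iff.rfl, fun a => ?_⟩
    show E.toFun (RegBool.rep E a)ᶜ = 1 - (a : H →L[ℂ] H)
    rw [RegBool.obs_compl E (RegBool.mrep E a), ← RegBool.hrep E a]
  · intro f hmeas hdis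
    refine ⟨E.sigmaAdditive f hmeas hdis, ?_, ?_⟩
    · intro i
      exact RegBool.obs_mono E (hmeas i) (MeasurableSet.iUnion hmeas) (Set.subset_iUnion f i)
    · intro Z hZ h
      exact RegBool.sigma_ub E hreg' f hmeas hdis hZ h


end
end

section
/- Let E : 𝒜 → L(H) be a regular observable and suppose E(X), E(Y) ∈ ran(E) satisfy E(X) + E(Y) ≤ I. Then E(X∩Y) = O, and there exist disjoint sets X₁, Y₁ ∈ 𝒜 with E(X₁) = E(X), E(Y₁) = E(Y), so that E(X) + E(Y) = E(X₁ ∪ Y₁) ∈ ran(E). -/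
open MeasureTheory

noncomputable section

variable {H : Type*} [NormedAddCommGroup H] [InnerProductSpace ℂ H] [CompleteSpace H]

section AuxLemmas

variable {H : Type*} [NormedAddCommGroup H] [InnerProductSpace ℂ H] [CompleteSpace H]

lemma ev_eq_zero_of_forall {T : H →L[ℂ] H} (h : ∀ φ : H, ev T φ = 0) : T = 0 := by
  have h2 : (T : H →ₗ[ℂ] H) = 0 := by
    rw [← inner_map_self_eq_zero]
    intro x
    have hx := h x
    unfold ev at hx
    rw [← inner_conj_symm]
    simp [hx]
  ext x
  have := congrArg (fun f : H →ₗ[ℂ] H => f x) h2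
  simpa using this

lemma obs_empty {Ω : Type*} [MeasurableSpace Ω] (E : Observable Ω H) :
    E.toFun ∅ = 0 := by
  apply ev_eq_zero_of_forall
  intro φ
  have h := E.sigmaAdditive (fun _ => (∅ : Set Ω)) (fun _ => MeasurableSet.empty)
    (fun i j _ => Set.disjoint_empty ∅) φ
  simp only [Set.iUnion_empty] at h
  have hs : Summable (fun _ : ℕ => ev (E.toFun ∅) φ) := h.summable
  have := hs.tendsto_atTop_zero
  have h2 : Filter.Tendsto (fun _ : ℕ => ev (E.toFun ∅) φ) Filter.atTop
      (nhds (ev (E.toFun ∅) φ)) := tendsto_const_nhds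
  exact tendsto_nhds_unique h2 this

lemma obs_additive {Ω : Type*} [MeasurableSpace Ω] (E : Observable Ω H)
    (A B : Set Ω) (hA : MeasurableSet A) (hB : MeasurableSet B) (hd : Disjoint A B) :
    E.toFun (A ∪ B) = E.toFun A + E.toFun B := by
  set f : ℕ → Set Ω := fun i => if i = 0 then A else if i = 1 then B else ∅ with hf
  have hmeas : ∀ i, MeasurableSet (f i) := by
    intro i
    simp only [hf]
    split_ifs <;> first | exact hA | exact hB | exact MeasurableSet.empty
  have hpair : Pairwise (Function.onFun Disjoint f) := by
    intro i j hij
    simp only [Function.onFun, hf]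
    split_ifs with h1 h2 h3 h4 h5 h6 h7 h8 <;>
      first
        | (exfalso; omega)
        | exact hd
        | exact hd.symm
        | exact Set.disjoint_empty _
        | exact (Set.empty_disjoint _)
  have hunion : (⋃ i, f i) = A ∪ B := by
    apply Set.Subset.antisymm
    · intro x hx
      obtain ⟨i, hi⟩ := Set.mem_iUnion.mp hx
      simp only [hf] at hi
      split_ifs at hi with h1 h2
      · exact Or.inl hi
      · exact Or.inr hi
      · exact absurd hi (Set.notMem_empty x)
    · intro x hx
      rcases hx with hx | hx
      · exact Set.mem_iUnion.mpr ⟨0, by simp [hf, hx]⟩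
      · exact Set.mem_iUnion.mpr ⟨1, by simp [hf, hx]⟩
  have key : ∀ φ : H, ev (E.toFun (A ∪ B)) φ = ev (E.toFun A) φ + ev (E.toFun B) φ := by
    intro φ
    have h := E.sigmaAdditive f hmeas hpair φ
    rw [hunion] at h
    have hzero : ∀ i ∉ ({0, 1} : Finset ℕ), ev (E.toFun (f i)) φ = 0 := by
      intro i hi
      simp only [Finset.mem_insert, Finset.mem_singleton, not_or] at hi
      have : f i = ∅ := by simp [hf, hi.1, hi.2]
      rw [this, obs_empty]
      simp [ev]
    have h2 : HasSum (fun i => ev (E.toFun (f i)) φ)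
        (∑ i ∈ ({0, 1} : Finset ℕ), ev (E.toFun (f i)) φ) :=
      hasSum_sum_of_ne_finset_zero hzero
    have := h.unique h2
    rw [this]
    simp [hf]
  apply sub_eq_zero.mp
  apply ev_eq_zero_of_forall
  intro φ
  unfold ev
  rw [ContinuousLinearMap.sub_apply, inner_sub_right, ContinuousLinearMap.add_apply,
    inner_add_right]
  have := key φ
  unfold ev at this
  rw [this]
  ring

end AuxLemmas

/-- For a regular observable `E`, if `E(X) + E(Y) ≤ I` then `E(X∩Y) = O`
and there are disjoint sets `X₁, Y₁` with `E(X₁) = E(X)`, `E(Y₁) = E(Y)`, so that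
`E(X) + E(Y) = E(X₁ ∪ Y₁) ∈ ran(E)`. -/
theorem regular_sum_in_range
    {Ω : Type*} [MeasurableSpace Ω] (E : Observable Ω H) (hreg : E.Regular)
    (X Y : Set Ω) (hX : MeasurableSet X) (hY : MeasurableSet Y)
    (hle : opLE (E.toFun X + E.toFun Y) 1) :
    E.toFun (X ∩ Y) = 0 ∧
    ∃ X₁ Y₁ : Set Ω, MeasurableSet X₁ ∧ MeasurableSet Y₁ ∧ Disjoint X₁ Y₁ ∧
      E.toFun X₁ = E.toFun X ∧ E.toFun Y₁ = E.toFun Y ∧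
      E.toFun X + E.toFun Y = E.toFun (X₁ ∪ Y₁) ∧
      E.toFun X + E.toFun Y ∈ E.ran := by
  set Z : Set Ω := X ∩ Y with hZdef
  have hZm : MeasurableSet Z := hX.inter hY
  have hdXY : Disjoint Z (X \ Y) :=
    Set.disjoint_sdiff_right.mono_left Set.inter_subset_right
  have hdYX : Disjoint Z (Y \ X) :=
    Set.disjoint_sdiff_right.mono_left Set.inter_subset_left
  have hXsplit : E.toFun X = E.toFun Z + E.toFun (X \ Y) := by
    rw [← obs_additive E Z (X \ Y) hZm (hX.diff hY) hdXY]
    congr 1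
    rw [hZdef, Set.inter_union_diff]
  have hYsplit : E.toFun Y = E.toFun Z + E.toFun (Y \ X) := by
    rw [← obs_additive E Z (Y \ X) hZm (hY.diff hX) hdYX]
    congr 1
    rw [hZdef, Set.inter_comm, Set.inter_union_diff]
  have hbound : ∀ φ : H, 2 * RCLike.re (@inner ℂ H _ ((E.toFun Z) φ) φ) ≤
      RCLike.re (@inner ℂ H _ φ φ) := by
    intro φ
    have h1 := hle.2 φ
    rw [ContinuousLinearMap.reApplyInnerSelf] at h1
    have hXZ := (E.pos (X \ Y) (hX.diff hY)).2 φ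
    have hYZ := (E.pos (Y \ X) (hY.diff hX)).2 φ
    rw [ContinuousLinearMap.reApplyInnerSelf] at hXZ hYZ
    have hx : RCLike.re (@inner ℂ H _ ((E.toFun X) φ) φ) =
        RCLike.re (@inner ℂ H _ ((E.toFun Z) φ) φ) +
        RCLike.re (@inner ℂ H _ ((E.toFun (X \ Y)) φ) φ) := by
      rw [hXsplit, ContinuousLinearMap.add_apply, inner_add_left, map_add]
    have hy : RCLike.re (@inner ℂ H _ ((E.toFun Y) φ) φ) =
        RCLike.re (@inner ℂ H _ ((E.toFun Z) φ) φ) +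
        RCLike.re (@inner ℂ H _ ((E.toFun (Y \ X)) φ) φ) := by
      rw [hYsplit, ContinuousLinearMap.add_apply, inner_add_left, map_add]
    rw [ContinuousLinearMap.sub_apply, inner_sub_left, map_sub,
      ContinuousLinearMap.add_apply, inner_add_left, map_add,
      ContinuousLinearMap.one_apply] at h1
    rw [hx, hy] at h1
    linarith
  have hZ0 : E.toFun Z = 0 := by
    by_contra h0
    have h1 : E.toFun Z ≠ 1 := by
      intro h1
      apply h0
      have hsub : Subsingleton H := by
        constructor
        intro a b
        have hb := hbound (a - b)
        rw [h1, ContinuousLinearMap.one_apply] at hb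
        have h2 : RCLike.re (@inner ℂ H _ (a - b) (a - b)) = 0 :=
          le_antisymm (by linarith) inner_self_nonneg
        rw [inner_self_eq_norm_sq] at h2
        have : (a - b : H) = 0 := by
          have := pow_eq_zero_iff (n := 2) (by norm_num) |>.mp h2
          exact norm_eq_zero.mp this
        exact sub_eq_zero.mp this
      exact Subsingleton.elim _ _
    have hle2 : opLE (E.toFun Z) ((1/2 : ℂ) • 1) := by
      constructor
      · have hsa1 : IsSelfAdjoint ((1/2 : ℂ) • (1 : H →L[ℂ] H)) := by
          rw [IsSelfAdjoint, star_smul, star_one]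
          norm_num
        exact ContinuousLinearMap.isSelfAdjoint_iff_isSymmetric.mp (hsa1.sub (E.pos Z hZm).isSelfAdjoint)
      · intro φ
        rw [ContinuousLinearMap.reApplyInnerSelf, ContinuousLinearMap.sub_apply,
          inner_sub_left, map_sub, ContinuousLinearMap.smul_apply, inner_smul_left,
          ContinuousLinearMap.one_apply]
        have hb := hbound φ
        have hhalf : RCLike.re ((starRingEnd ℂ) (1/2 : ℂ) * @inner ℂ H _ φ φ) =
            (1/2 : ℝ) * RCLike.re (@inner ℂ H _ φ φ) := by
          rw [RCLike.mul_re]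
          simp
        rw [hhalf]
        linarith
    exact (hreg Z hZm h0 h1).1 hle2
  have hadd : E.toFun X + E.toFun (Y \ X) = E.toFun (X ∪ (Y \ X)) :=
    (obs_additive E X (Y \ X) hX (hY.diff hX) Set.disjoint_sdiff_right).symm
  refine ⟨hZ0, X, Y \ X, hX, hY.diff hX, Set.disjoint_sdiff_right, rfl, ?_, ?_, ?_⟩
  · rw [hYsplit, hZ0, zero_add]
  · rw [hYsplit, hZ0, zero_add, hadd]
  · exact ⟨X ∪ (Y \ X), hX.union (hY.diff hX), by rw [hYsplit, hZ0, zero_add, hadd]⟩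

end
end
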